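/- Let A be a symmetric positive-definite 3×3 real matrix, S := A⁻¹J(A−I), and m the associated symbol. Fix a₀ ∈ ℝ \ {0} and k₀ ∈ ℝ³ \ {0}, and set a(t) := a₀ exp(∫₀ᵗ m(e^{−rSᵀ}k₀) dr), k(t) := e^{−tSᵀ}k₀. Then the plane wave φ(x,t) := a(t) k(t) e^{2πi k(t)·x} (with values in ℂ³) satisfies, pointwise for all (x,t) ∈ ℝ³ × ℝ, the linearised semi-geostrophic equation ∂ₜφ(x,t) + (Sx·∇)φ(x,t) + Sᵀφ(x,t) = m(k(t)) φ(x,t), where the right-hand side is the action of the Fourier multiplier with symbol m on the plane wave with frequency k(t). -/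

import Mathlib

open Matrix MeasureTheory Real

/-- The Coriolis-type matrix `J`. -/
noncomputable def Jmat : Matrix (Fin 3) (Fin 3) ℝ := !![0, -1, 0; 1, 0, 0; 0, 0, 0]

/-- The matrix `S := A⁻¹ J (A − I)`. -/
noncomputable def Smat (A : Matrix (Fin 3) (Fin 3) ℝ) : Matrix (Fin 3) (Fin 3) ℝ :=
  A⁻¹ * Jmat * (A - 1)

/-- The symbol `m(x) = 2 (x · A⁻¹Jx)/(x · A⁻¹x)`. -/
noncomputable def symb (A : Matrix (Fin 3) (Fin 3) ℝ) (x : Fin 3 → ℝ) : ℝ :=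
  2 * (x ⬝ᵥ (A⁻¹ * Jmat) *ᵥ x) / (x ⬝ᵥ A⁻¹ *ᵥ x)

/-- The plane-wave amplitude `a(t) := a₀ exp(∫₀ᵗ m(e^{−rSᵀ}k₀) dr)`. -/
noncomputable def ampl (A : Matrix (Fin 3) (Fin 3) ℝ) (a₀ : ℝ) (k₀ : Fin 3 → ℝ) (t : ℝ) : ℝ :=
  a₀ * Real.exp (∫ r in (0:ℝ)..t, symb A (NormedSpace.exp ((-r) • (Smat A)ᵀ) *ᵥ k₀))

/-- The plane-wave frequency `k(t) := e^{−tSᵀ}k₀`. -/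
noncomputable def freq (A : Matrix (Fin 3) (Fin 3) ℝ) (k₀ : Fin 3 → ℝ) (t : ℝ) : Fin 3 → ℝ :=
  NormedSpace.exp ((-t) • (Smat A)ᵀ) *ᵥ k₀

/-- A real matrix viewed as a complex matrix. -/
noncomputable def cmat (M : Matrix (Fin 3) (Fin 3) ℝ) : Matrix (Fin 3) (Fin 3) ℂ :=
  M.map (fun r => (r : ℂ))

/-- The plane wave `φ(x,t) := a(t) k(t) e^{2πi k(t)·x}` with values in `ℂ³`. -/
noncomputable def planeWave (A : Matrix (Fin 3) (Fin 3) ℝ) (a₀ : ℝ) (k₀ : Fin 3 → ℝ)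
    (x : Fin 3 → ℝ) (t : ℝ) : Fin 3 → ℂ :=
  fun i => ((ampl A a₀ k₀ t * freq A k₀ t i : ℝ) : ℂ) *
    Complex.exp (2 * π * Complex.I * (freq A k₀ t ⬝ᵥ x))


/-! The frequency solves `k' = -Sᵀk` and the amplitude `a' = m(k) a`, the latter by the
fundamental theorem of calculus: `r ↦ m(k(r))` is continuous because `A⁻¹` is positive definite
and `k(r) = e^{-rSᵀ}k₀` never vanishes. For any plane wave `φ = a k e^{2πi k·x}` one has
`∂ₜφ = (a'k + a k') e^{2πi k·x} + 2πi (k'·x) φ` and `(Sx·∇)φ = 2πi (k·Sx) φ = 2πi (Sᵀk·x) φ`.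
With `k' = -Sᵀk` the two phase terms cancel, `a k' e^{2πi k·x}` cancels `Sᵀφ`, and what is left
is `a'k e^{2πi k·x} = m(k) φ`. -/

section MatrixExp

variable {ι : Type*} [Fintype ι] [DecidableEq ι]

attribute [local instance] Matrix.linftyOpNormedAddCommGroup Matrix.linftyOpNormedRing
  Matrix.linftyOpNormedAlgebra

theorem hasDerivAt_exp_neg_smul_mulVec (M : Matrix ι ι ℝ) (v : ι → ℝ) (t : ℝ) :
    HasDerivAt (fun s : ℝ => NormedSpace.exp ((-s) • M) *ᵥ v)
      (-(M *ᵥ (NormedSpace.exp ((-t) • M) *ᵥ v))) t := by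
  let mulVecCLM : Matrix ι ι ℝ →L[ℝ] ι → ℝ :=
    ((Matrix.mulVecBilin ℝ ℝ).flip v).toContinuousLinearMap
  have hexp : HasDerivAt (fun s : ℝ => NormedSpace.exp ((-s) • M))
      ((-1 : ℝ) • (NormedSpace.exp ((-t) • M) * M)) t :=
    (hasDerivAt_exp_smul_const M (-t)).scomp t (hasDerivAt_neg t)
  refine (mulVecCLM.hasFDerivAt.comp_hasDerivAt t hexp).congr_deriv ?_
  change ((-1 : ℝ) • (NormedSpace.exp ((-t) • M) * M)) *ᵥ v = _
  rw [(((Commute.refl M).smul_left (-t)).exp_left).eq, Matrix.smul_mulVec,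
    ← Matrix.mulVec_mulVec, neg_one_smul]

theorem exp_mulVec_ne_zero (M : Matrix ι ι ℝ) {v : ι → ℝ} (hv : v ≠ 0) :
    NormedSpace.exp M *ᵥ v ≠ 0 := by
  rw [← Matrix.mulVec_zero (NormedSpace.exp M)]
  exact (Matrix.mulVec_injective_iff_isUnit.2 (Matrix.isUnit_exp M)).ne hv

end MatrixExp

theorem hasDerivAt_freq (A : Matrix (Fin 3) (Fin 3) ℝ) (k₀ : Fin 3 → ℝ) (t : ℝ) :
    HasDerivAt (freq A k₀) (-((Smat A)ᵀ *ᵥ freq A k₀ t)) t :=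
  hasDerivAt_exp_neg_smul_mulVec _ k₀ t

theorem freq_ne_zero (A : Matrix (Fin 3) (Fin 3) ℝ) {k₀ : Fin 3 → ℝ} (hk₀ : k₀ ≠ 0) (t : ℝ) :
    freq A k₀ t ≠ 0 :=
  exp_mulVec_ne_zero _ hk₀

theorem continuousAt_symb {A : Matrix (Fin 3) (Fin 3) ℝ} (hA : A.PosDef) {x : Fin 3 → ℝ}
    (hx : x ≠ 0) : ContinuousAt (symb A) x := by
  have hquad (B : Matrix (Fin 3) (Fin 3) ℝ) : Continuous fun y : Fin 3 → ℝ => y ⬝ᵥ B *ᵥ y :=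
    continuous_id.dotProduct (continuous_const.matrix_mulVec continuous_id)
  have hden : x ⬝ᵥ A⁻¹ *ᵥ x ≠ 0 := by
    simpa using (hA.inv.dotProduct_mulVec_pos hx).ne'
  exact (continuous_const.mul (hquad _)).continuousAt.div (hquad _).continuousAt hden

theorem hasDerivAt_ampl {A : Matrix (Fin 3) (Fin 3) ℝ} (hA : A.PosDef) (a₀ : ℝ)
    {k₀ : Fin 3 → ℝ} (hk₀ : k₀ ≠ 0) (t : ℝ) :
    HasDerivAt (ampl A a₀ k₀) (symb A (freq A k₀ t) * ampl A a₀ k₀ t) t := by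
  have hcont : Continuous fun r => symb A (freq A k₀ r) :=
    continuous_iff_continuousAt.2 fun r =>
      (continuousAt_symb hA (freq_ne_zero A hk₀ r)).comp (hasDerivAt_freq A k₀ r).continuousAt
  refine (((hcont.integral_hasStrictDerivAt 0 t).hasDerivAt.exp).const_mul a₀).congr_deriv ?_
  unfold ampl freq
  ring

section PlaneWave

variable {ι : Type*} [Fintype ι]

noncomputable def planeWaveOf (a : ℝ → ℝ) (k : ℝ → ι → ℝ) (x : ι → ℝ) (t : ℝ) : ι → ℂ :=
  fun i => ((a t * k t i : ℝ) : ℂ) * Complex.exp (2 * π * Complex.I * (k t ⬝ᵥ x))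

theorem planeWave_eq_planeWaveOf (A : Matrix (Fin 3) (Fin 3) ℝ) (a₀ : ℝ) (k₀ : Fin 3 → ℝ) :
    planeWave A a₀ k₀ = planeWaveOf (ampl A a₀ k₀) (freq A k₀) := rfl

variable {a : ℝ → ℝ} {k : ℝ → ι → ℝ} {a' t : ℝ} {k' : ι → ℝ}

theorem hasDerivAt_planeWaveOf (ha : HasDerivAt a a' t) (hk : HasDerivAt k k' t) (x : ι → ℝ) :
    HasDerivAt (planeWaveOf a k x)
      (fun i => ((a' * k t i + a t * k' i : ℝ) : ℂ) * Complex.exp (2 * π * Complex.I * (k t ⬝ᵥ x))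
        + 2 * π * Complex.I * (k' ⬝ᵥ x : ℝ) * planeWaveOf a k x t i) t := by
  have hphase : HasDerivAt (fun s => k s ⬝ᵥ x) (k' ⬝ᵥ x) t :=
    ((dotProductBilin ℝ ℝ).flip x).toContinuousLinearMap.hasFDerivAt.comp_hasDerivAt t hk
  refine hasDerivAt_pi.2 fun i => ?_
  refine (((ha.mul (hasDerivAt_pi.1 hk i)).ofReal_comp).mul
    ((hphase.ofReal_comp.const_mul (2 * π * Complex.I)).cexp)).congr_deriv ?_
  simp only [planeWaveOf, Pi.mul_apply]
  push_cast
  ring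

theorem hasFDerivAt_planeWaveOf (x : ι → ℝ) (t : ℝ) :
    HasFDerivAt (fun y => planeWaveOf a k y t)
      (((2 * π * Complex.I) • Complex.ofRealCLM.comp
        (dotProductBilin ℝ ℝ (k t)).toContinuousLinearMap).smulRight (planeWaveOf a k x t)) x := by
  have hphase : HasFDerivAt (fun y => 2 * π * Complex.I * ((k t ⬝ᵥ y : ℝ) : ℂ))
      ((2 * π * Complex.I) • Complex.ofRealCLM.comp
        (dotProductBilin ℝ ℝ (k t)).toContinuousLinearMap) x :=
    (Complex.ofRealCLM.comp (dotProductBilin ℝ ℝ (k t)).toContinuousLinearMap).hasFDerivAt.const_mul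
      (2 * π * Complex.I)
  refine hasFDerivAt_pi'' fun i => (hphase.cexp.const_mul _).congr_fderiv ?_
  ext v
  simp only [ContinuousLinearMap.proj_apply, ContinuousLinearMap.comp_apply,
    ContinuousLinearMap.smulRight_apply, _root_.smul_apply,
    LinearMap.coe_toContinuousLinearMap', dotProductBilin_apply_apply, Complex.ofRealCLM_apply,
    Pi.smul_apply, smul_eq_mul, planeWaveOf]
  ring

theorem map_ofReal_mulVec_planeWaveOf (B : Matrix ι ι ℝ) (x : ι → ℝ) (t : ℝ) (i : ι) :
    (B.map (↑) *ᵥ planeWaveOf a k x t) i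
      = ((a t * (B *ᵥ k t) i : ℝ) : ℂ) * Complex.exp (2 * π * Complex.I * (k t ⬝ᵥ x)) := by
  unfold planeWaveOf
  -- hide the phase, so that only the matrix product is expanded into sums
  set E := Complex.exp (2 * π * Complex.I * (k t ⬝ᵥ x))
  simp only [mulVec, dotProduct, map_apply]
  push_cast
  rw [Finset.mul_sum, Finset.sum_mul]
  exact Finset.sum_congr rfl fun j _ => by ring

theorem planeWaveOf_transport_eq (S : Matrix ι ι ℝ) (μ : ℝ) (ha : HasDerivAt a (μ * a t) t)
    (hk : HasDerivAt k (-(Sᵀ *ᵥ k t)) t) (x : ι → ℝ) :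
    deriv (planeWaveOf a k x) t + fderiv ℝ (fun y => planeWaveOf a k y t) x (S *ᵥ x)
      + Sᵀ.map (↑) *ᵥ planeWaveOf a k x t = (μ : ℂ) • planeWaveOf a k x t := by
  have hadjoint : k t ⬝ᵥ S *ᵥ x = Sᵀ *ᵥ k t ⬝ᵥ x := by
    rw [dotProduct_mulVec, mulVec_transpose]
  rw [(hasDerivAt_planeWaveOf ha hk x).deriv, (hasFDerivAt_planeWaveOf x t).fderiv]
  funext i
  simp only [Pi.add_apply, Pi.smul_apply, Pi.neg_apply, ContinuousLinearMap.smulRight_apply,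
    _root_.smul_apply, ContinuousLinearMap.comp_apply,
    LinearMap.coe_toContinuousLinearMap', dotProductBilin_apply_apply, Complex.ofRealCLM_apply,
    smul_eq_mul, neg_dotProduct, hadjoint, map_ofReal_mulVec_planeWaveOf, planeWaveOf]
  push_cast
  ring

end PlaneWave

theorem planewave_solves_LSG_general (A : Matrix (Fin 3) (Fin 3) ℝ) (hApd : A.PosDef)
    (a₀ : ℝ) (k₀ : Fin 3 → ℝ) (hk₀ : k₀ ≠ 0) :
    ∀ x : Fin 3 → ℝ, ∀ t : ℝ,
      DifferentiableAt ℝ (fun s => planeWave A a₀ k₀ x s) t ∧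
      DifferentiableAt ℝ (fun y => planeWave A a₀ k₀ y t) x ∧
      deriv (fun s => planeWave A a₀ k₀ x s) t
          + fderiv ℝ (fun y => planeWave A a₀ k₀ y t) x (Smat A *ᵥ x)
          + cmat (Smat A)ᵀ *ᵥ planeWave A a₀ k₀ x t =
        ((symb A (freq A k₀ t) : ℝ) : ℂ) • planeWave A a₀ k₀ x t := by
  intro x t
  have ha := hasDerivAt_ampl hApd a₀ hk₀ t
  have hk := hasDerivAt_freq A k₀ t
  rw [planeWave_eq_planeWaveOf]
  exact ⟨(hasDerivAt_planeWaveOf ha hk x).differentiableAt,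
    (hasFDerivAt_planeWaveOf x t).differentiableAt, planeWaveOf_transport_eq (Smat A) _ ha hk x⟩

/-- the plane wave `φ(x,t) = a(t)k(t)e^{2πi k(t)·x}` satisfies pointwise the
linearised semi-geostrophic equation
`∂ₜφ + (Sx·∇)φ + Sᵀφ = m(k(t))φ` (the right-hand side being the action of the Fourier
multiplier with symbol `m` on a plane wave of frequency `k(t)`). -/
theorem planewave_solves_LSG (A : Matrix (Fin 3) (Fin 3) ℝ) (hApd : A.PosDef)
    (a₀ : ℝ) (ha₀ : a₀ ≠ 0) (k₀ : Fin 3 → ℝ) (hk₀ : k₀ ≠ 0) :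
    ∀ x : Fin 3 → ℝ, ∀ t : ℝ,
      DifferentiableAt ℝ (fun s => planeWave A a₀ k₀ x s) t ∧
      DifferentiableAt ℝ (fun y => planeWave A a₀ k₀ y t) x ∧
      deriv (fun s => planeWave A a₀ k₀ x s) t
          + fderiv ℝ (fun y => planeWave A a₀ k₀ y t) x (Smat A *ᵥ x)
          + cmat (Smat A)ᵀ *ᵥ planeWave A a₀ k₀ x t =
        ((symb A (freq A k₀ t) : ℝ) : ℂ) • planeWave A a₀ k₀ x t :=
  planewave_solves_LSG_general A hApd a₀ k₀ hk₀
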